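/- arXiv:2307.12646 — 6 statements merged into one kernel-verified Lean document; each statement's English description precedes it below -/
import Mathlib

section
/- Let P be an s–t path in a graph G = (V,E) and let F ⊆ E \ E(P) be an inclusion-minimal edge set such that P ∪ F contains two internally node-disjoint s–t paths. Then every node v ∈ V \ V(P) has degree 0 or 2 in F, and consequently F partitions into 'attachment paths', i.e., paths whose endpoints lie on P but whose internal nodes are disjoint from P. -/
/-!
By minimality every edge of `F` lies on one of the two internally disjoint `s`-`t` paths `p`, `q`
in `P ∪ F`: otherwise the `F`-edges they use would be a smaller witness. A node off `P` can then
only be an internal node of one of `p`, `q`, and all its edges on that path belong to `F`, so it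
has `F`-degree `2` or `0`. Cutting `p` at its nodes on `P` splits its `F`-edges into attachment
paths. The same works for the `F`-edges of `q` not on `p`, because an edge shared by `p` and `q` has
both ends in `{s, t}`, on `P`; together these paths partition `F`.
-/

open SimpleGraph

def TwoDisjointPaths {V : Type*} (G : SimpleGraph V) (s t : V) : Prop :=
  ∃ p q : G.Walk s t, p.IsPath ∧ q.IsPath ∧
    ∀ v, v ∈ p.support → v ∈ q.support → v = s ∨ v = t

namespace SimpleGraph.Walk

variable {V : Type*} {G : SimpleGraph V}

lemma IsPath.countP_edges_mem_start [DecidableEq V] {a b : V} {w : G.Walk a b} (hw : w.IsPath)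
    (hab : a ≠ b) : w.edges.countP (a ∈ ·) = 1 := by
  cases w with
  | nil => exact absurd rfl hab
  | cons h w' =>
    rw [cons_isPath_iff] at hw
    have : w'.edges.countP (a ∈ ·) = 0 :=
      List.countP_eq_zero.mpr fun e he ha =>
        hw.2 (mem_support_of_mem_edges he (of_decide_eq_true ha))
    simp [this]

lemma IsPath.countP_edges_mem_eq_two [DecidableEq V] {a b v : V} {w : G.Walk a b}
    (hw : w.IsPath) (hv : v ∈ w.support) (hva : v ≠ a) (hvb : v ≠ b) :
    w.edges.countP (v ∈ ·) = 2 := by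
  induction w with
  | nil => exact absurd (by simpa using hv) hva
  | @cons a c b h w' ih =>
    rw [cons_isPath_iff] at hw
    rw [support_cons, List.mem_cons] at hv
    rcases hv with rfl | hv
    · exact absurd rfl hva
    by_cases hvc : v = c
    · subst hvc
      simp [hw.1.countP_edges_mem_start hvb]
    · have : v ∉ s(a, c) := by simp [hva, hvc]
      simpa [this] using ih hw.1 hv hvc hvb

def IsAttachmentPath (S : Set V) {u v : V} (Q : G.Walk u v) : Prop :=
  Q.IsPath ∧ u ∈ S ∧ v ∈ S ∧ ∀ x ∈ Q.support, x ≠ u → x ≠ v → x ∉ S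

variable [DecidableEq V] {K : SimpleGraph V} {S : Set V} {A : Finset (Sym2 V)}

/-- The walk `σ` is the unfinished first segment: it becomes an attachment path once its start
is known to lie in `S`. -/
lemma IsPath.exists_attachmentPath_decomposition_aux (hAK : ∀ e ∈ A, e ∈ K.edgeSet) {a b : V}
    {w : G.Walk a b} (hw : w.IsPath) (hb : b ∈ S) (hS : ∀ e ∈ w.edges, e ∉ A → ∀ x ∈ e, x ∈ S) :
    ∃ (d : V) (σ : K.Walk a d) (L : List (Σ u v, K.Walk u v)),
      d ∈ S ∧ σ.IsPath ∧ σ.support ⊆ w.support ∧ (∀ x ∈ σ.support, x ≠ a → x ≠ d → x ∉ S) ∧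
      (∀ Q ∈ L, Q.2.2.IsAttachmentPath S) ∧
      σ.edges ++ L.flatMap (fun Q => Q.2.2.edges) = w.edges.filter (· ∈ A) := by
  induction w with
  | nil => exact ⟨_, Walk.nil, [], hb, by simp, by simp, by simp, by simp, by simp⟩
  | @cons a c b h w' ih =>
    rw [cons_isPath_iff] at hw
    obtain ⟨d, σ, L, hd, hσ, hσw, hσS, hL, hedges⟩ :=
      ih hw.1 hb fun e he => hS e (List.mem_cons_of_mem _ he)
    by_cases hc : c ∈ S
    · have hσL : ∀ Q ∈ ⟨c, d, σ⟩ :: L, Q.2.2.IsAttachmentPath S := by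
        rintro Q (_ | ⟨_, hQ⟩)
        exacts [⟨hσ, hc, hd, hσS⟩, hL Q hQ]
      by_cases hac : s(a, c) ∈ A
      · have hK : K.Adj a c := hAK _ hac
        refine ⟨c, cons hK Walk.nil, ⟨c, d, σ⟩ :: L, hc, by simp [hK.ne], by simp, by simp, hσL, ?_⟩
        simp [hac, ← hedges]
      · have ha : a ∈ S := hS _ (by simp) hac a (Sym2.mem_mk_left a c)
        refine ⟨a, Walk.nil, ⟨c, d, σ⟩ :: L, ha, by simp, by simp, by simp, hσL, ?_⟩
        simp [hac, ← hedges]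
    · have hac : s(a, c) ∈ A :=
        by_contra fun hac => hc (hS _ (by simp) hac c (Sym2.mem_mk_right a c))
      have hK : K.Adj a c := hAK _ hac
      refine ⟨d, cons hK σ, L, hd, ?_, ?_, ?_, hL, by simp [hac, ← hedges]⟩
      · exact (cons_isPath_iff _ _).mpr ⟨hσ, fun ha => hw.2 (hσw ha)⟩
      · exact List.cons_subset_cons _ hσw
      · intro x hx hxa hxd
        rcases List.mem_cons.mp (by simpa using hx) with rfl | hx
        exacts [absurd rfl hxa, (if hxc : x = c then hxc ▸ hc else hσS x hx hxc hxd)]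

lemma IsPath.exists_attachmentPath_decomposition (hAK : ∀ e ∈ A, e ∈ K.edgeSet) {a b : V}
    {w : G.Walk a b} (hw : w.IsPath) (ha : a ∈ S) (hb : b ∈ S)
    (hS : ∀ e ∈ w.edges, e ∉ A → ∀ x ∈ e, x ∈ S) :
    ∃ L : List (Σ u v, K.Walk u v), (∀ Q ∈ L, Q.2.2.IsAttachmentPath S) ∧
      L.flatMap (fun Q => Q.2.2.edges) = w.edges.filter (· ∈ A) := by
  obtain ⟨d, σ, L, hd, hσ, -, hσS, hL, hedges⟩ :=
    hw.exists_attachmentPath_decomposition_aux hAK hb hS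
  refine ⟨⟨a, d, σ⟩ :: L, ?_, by simpa using hedges⟩
  rintro Q (_ | ⟨_, hQ⟩)
  exacts [⟨hσ, ha, hd, hσS⟩, hL Q hQ]

end SimpleGraph.Walk

lemma List.exists_fin_walks_of_nodup_flatMap_edges {V : Type*} {K : SimpleGraph V}
    (L : List (Σ u v, K.Walk u v)) (hL : (L.flatMap fun Q => Q.2.2.edges).Nodup) :
    ∃ (k : ℕ) (u w : Fin k → V) (Q : ∀ m, K.Walk (u m) (w m)),
      (∀ m, ⟨u m, w m, Q m⟩ ∈ L) ∧
      (∀ m m', m ≠ m' → ∀ e ∈ (Q m).edges, e ∉ (Q m').edges) ∧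
      ∀ e, e ∈ L.flatMap (fun Q => Q.2.2.edges) ↔ ∃ m, e ∈ (Q m).edges := by
  have hdisj := List.pairwise_iff_get.mp (List.nodup_flatMap.mp hL).2
  refine ⟨L.length, fun m => (L.get m).1, fun m => (L.get m).2.1, fun m => (L.get m).2.2,
    fun m => L.get_mem m, fun m m' hmm' e he he' => ?_, fun e => ?_⟩
  · rcases lt_or_gt_of_ne hmm' with hlt | hlt
    exacts [hdisj m m' hlt he he', hdisj m' m hlt he' he]
  · rw [List.mem_flatMap]
    constructor
    · rintro ⟨Q, hQ, he⟩
      obtain ⟨m, rfl⟩ := List.mem_iff_get.mp hQ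
      exact ⟨m, he⟩
    · rintro ⟨m, he⟩
      exact ⟨_, L.get_mem m, he⟩

section MinimalDisjointPaths

variable {V : Type*} [DecidableEq V] {s t : V} {F : Finset (Sym2 V)} {E : Set (Sym2 V)}
  {p q : (fromEdgeSet ((↑F : Set (Sym2 V)) ∪ E)).Walk s t}

lemma mem_edges_or_mem_edges_of_minimal
    (hmin : ∀ F' ⊂ F, ¬ TwoDisjointPaths (fromEdgeSet ((↑F' : Set (Sym2 V)) ∪ E)) s t)
    (hp : p.IsPath) (hq : q.IsPath) (hpq : ∀ v, v ∈ p.support → v ∈ q.support → v = s ∨ v = t) :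
    ∀ e ∈ F, e ∈ p.edges ∨ e ∈ q.edges := by
  by_contra! ⟨e₀, he₀F, he₀p, he₀q⟩
  set F' := F.filter (fun e => e ∈ p.edges ∨ e ∈ q.edges)
  have hF' : F' ⊂ F :=
    Finset.filter_ssubset.mpr ⟨e₀, he₀F, by simp [he₀p, he₀q]⟩
  have hsub : ∀ r : (fromEdgeSet ((↑F : Set (Sym2 V)) ∪ E)).Walk s t,
      (∀ e ∈ r.edges, e ∈ F → e ∈ F') →
      ∀ e ∈ r.edges, e ∈ (fromEdgeSet ((↑F' : Set (Sym2 V)) ∪ E)).edgeSet := by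
    intro r hr e he
    have he' := r.edges_subset_edgeSet he
    rw [edgeSet_fromEdgeSet] at he' ⊢
    refine ⟨?_, he'.2⟩
    rcases he'.1 with heF | heE
    exacts [Or.inl (hr e he heF), Or.inr heE]
  refine hmin F' hF' ⟨p.transfer _ (hsub p ?_), q.transfer _ (hsub q ?_),
    hp.transfer _, hq.transfer _, by simpa only [Walk.support_transfer] using hpq⟩
  · exact fun e he heF => Finset.mem_filter.mpr ⟨heF, Or.inl he⟩
  · exact fun e he heF => Finset.mem_filter.mpr ⟨heF, Or.inr he⟩

lemma card_filter_mem_eq_two_of_mem_support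
    {r o : (fromEdgeSet ((↑F : Set (Sym2 V)) ∪ E)).Walk s t} {v : V} (hr : r.IsPath)
    (hvr : v ∈ r.support) (hvo : v ∉ o.support) (hFro : ∀ e ∈ F, e ∈ r.edges ∨ e ∈ o.edges)
    (hvE : ∀ e ∈ E, v ∉ e) : (F.filter (v ∈ ·)).card = 2 := by
  have hF : F.filter (v ∈ ·) = (r.edges.filter (v ∈ ·)).toFinset := by
    ext e
    simp only [Finset.mem_filter, List.mem_toFinset, List.mem_filter, decide_eq_true_eq]
    refine ⟨fun ⟨heF, hve⟩ => ⟨?_, hve⟩, fun ⟨her, hve⟩ => ⟨?_, hve⟩⟩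
    · exact (hFro e heF).resolve_right fun heo => hvo (o.mem_support_of_mem_edges heo hve)
    · have he := r.edges_subset_edgeSet her
      rw [edgeSet_fromEdgeSet] at he
      exact he.1.resolve_right fun heE => hvE e heE hve
  rw [hF, List.toFinset_card_of_nodup (hr.isTrail.edges_nodup.filter _),
    ← List.countP_eq_length_filter]
  exact hr.countP_edges_mem_eq_two hvr (by rintro rfl; exact hvo o.start_mem_support)
    (by rintro rfl; exact hvo o.end_mem_support)

lemma card_filter_mem_eq_zero_or_two {v : V} (hp : p.IsPath) (hq : q.IsPath)
    (hpq : ∀ v, v ∈ p.support → v ∈ q.support → v = s ∨ v = t)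
    (hFpq : ∀ e ∈ F, e ∈ p.edges ∨ e ∈ q.edges) (hvE : ∀ e ∈ E, v ∉ e) (hvs : v ≠ s)
    (hvt : v ≠ t) : (F.filter (v ∈ ·)).card = 0 ∨ (F.filter (v ∈ ·)).card = 2 := by
  have hst : ¬ (v = s ∨ v = t) := by tauto
  by_cases hvp : v ∈ p.support
  · exact Or.inr <| card_filter_mem_eq_two_of_mem_support hp hvp (fun hvq => hst (hpq v hvp hvq))
      hFpq hvE
  by_cases hvq : v ∈ q.support
  · exact Or.inr <| card_filter_mem_eq_two_of_mem_support hq hvq (fun hvp => hst (hpq v hvp hvq))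
      (fun e he => (hFpq e he).symm) hvE
  refine Or.inl (Finset.card_eq_zero.mpr (Finset.filter_eq_empty_iff.mpr fun e heF hve => ?_))
  rcases hFpq e heF with he | he
  exacts [hvp (p.mem_support_of_mem_edges he hve), hvq (q.mem_support_of_mem_edges he hve)]

lemma exists_attachmentPath_cover {S : Set V} (hs : s ∈ S) (ht : t ∈ S)
    (hES : ∀ e ∈ E, ∀ x ∈ e, x ∈ S) (hp : p.IsPath) (hq : q.IsPath)
    (hpq : ∀ v, v ∈ p.support → v ∈ q.support → v = s ∨ v = t)
    (hFpq : ∀ e ∈ F, e ∈ p.edges ∨ e ∈ q.edges) :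
    ∃ L : List (Σ u v, (fromEdgeSet (↑F : Set (Sym2 V))).Walk u v),
      (∀ Q ∈ L, Q.2.2.IsAttachmentPath S) ∧ (L.flatMap fun Q => Q.2.2.edges).Nodup ∧
      ∀ e, e ∈ L.flatMap (fun Q => Q.2.2.edges) ↔ e ∈ F := by
  have hFK : ∀ e ∈ F, e ∈ (fromEdgeSet (↑F : Set (Sym2 V))).edgeSet := by
    intro e heF
    have he : e ∈ (fromEdgeSet ((↑F : Set (Sym2 V)) ∪ E)).edgeSet := by
      rcases hFpq e heF with he | he
      exacts [p.edges_subset_edgeSet he, q.edges_subset_edgeSet he]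
    rw [edgeSet_fromEdgeSet] at he ⊢
    exact ⟨heF, he.2⟩
  have hE : ∀ {u v : V} (r : (fromEdgeSet ((↑F : Set (Sym2 V)) ∪ E)).Walk u v),
      ∀ e ∈ r.edges, e ∉ F → e ∈ E := by
    intro u v r e he heF
    have he := r.edges_subset_edgeSet he
    rw [edgeSet_fromEdgeSet] at he
    exact he.1.resolve_left heF
  obtain ⟨Lp, hLp, hLp_edges⟩ := hp.exists_attachmentPath_decomposition hFK hs ht
    fun e he heF => hES e (hE p e he heF)
  obtain ⟨Lq, hLq, hLq_edges⟩ := hq.exists_attachmentPath_decomposition (A := F \ p.edges.toFinset)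
    (fun e he => hFK e (Finset.mem_sdiff.mp he).1) hs ht fun e he heA x hx => by
      by_cases heF : e ∈ F
      · have hep : e ∈ p.edges := by simpa [heF] using heA
        rcases hpq x (p.mem_support_of_mem_edges hep hx) (q.mem_support_of_mem_edges he hx)
          with rfl | rfl
        exacts [hs, ht]
      · exact hES e (hE q e he heF) x hx
  refine ⟨Lp ++ Lq, ?_, ?_, fun e => ?_⟩
  · simpa only [List.mem_append, or_imp, forall_and] using And.intro hLp hLq
  · rw [List.flatMap_append, hLp_edges, hLq_edges]
    refine List.nodup_append.mpr ⟨hp.isTrail.edges_nodup.filter _,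
      hq.isTrail.edges_nodup.filter _, fun e he e' he' hee' => ?_⟩
    subst hee'
    simp only [List.mem_filter, decide_eq_true_eq, Finset.mem_sdiff, List.mem_toFinset] at he he'
    exact he'.2.2 he.1
  · rw [List.flatMap_append, hLp_edges, hLq_edges]
    simp only [List.mem_append, List.mem_filter, decide_eq_true_eq, Finset.mem_sdiff,
      List.mem_toFinset]
    have := hFpq e
    tauto

end MinimalDisjointPaths

theorem stmt1_general {V : Type*} [DecidableEq V] (G : SimpleGraph V) (s t : V)
    (P : G.Walk s t)
    (F : Finset (Sym2 V))
    (hF : TwoDisjointPaths (fromEdgeSet ((↑F : Set (Sym2 V)) ∪ {e | e ∈ P.edges})) s t)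
    (hmin : ∀ F' ⊂ F,
      ¬ TwoDisjointPaths (fromEdgeSet ((↑F' : Set (Sym2 V)) ∪ {e | e ∈ P.edges})) s t) :
    (∀ v, v ∉ P.support →
      (F.filter (fun e => v ∈ e)).card = 0 ∨ (F.filter (fun e => v ∈ e)).card = 2) ∧
    ∃ (k : ℕ) (u w : Fin k → V)
      (Q : ∀ m : Fin k, (fromEdgeSet (↑F : Set (Sym2 V))).Walk (u m) (w m)),
      (∀ m, (Q m).IsPath ∧ u m ∈ P.support ∧ w m ∈ P.support ∧
        ∀ x ∈ (Q m).support, x ≠ u m → x ≠ w m → x ∉ P.support) ∧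
      (∀ m m', m ≠ m' → ∀ e ∈ (Q m).edges, e ∉ (Q m').edges) ∧
      (∀ e, e ∈ F ↔ ∃ m, e ∈ (Q m).edges) := by
  obtain ⟨p, q, hp, hq, hpq⟩ := hF
  have hFpq := mem_edges_or_mem_edges_of_minimal hmin hp hq hpq
  have hPS : ∀ e ∈ {e | e ∈ P.edges}, ∀ x ∈ e, x ∈ {x | x ∈ P.support} :=
    fun e he x hx => P.mem_support_of_mem_edges he hx
  refine ⟨fun v hv => card_filter_mem_eq_zero_or_two hp hq hpq hFpq
    (fun e he hve => hv (hPS e he v hve)) (by rintro rfl; exact hv P.start_mem_support)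
    (by rintro rfl; exact hv P.end_mem_support), ?_⟩
  obtain ⟨L, hL, hL_nodup, hL_edges⟩ :=
    exists_attachmentPath_cover (S := {x | x ∈ P.support}) P.start_mem_support P.end_mem_support
      hPS hp hq hpq hFpq
  obtain ⟨k, u, w, Q, hQL, hQ_disj, hQ_edges⟩ :=
    L.exists_fin_walks_of_nodup_flatMap_edges hL_nodup
  exact ⟨k, u, w, Q, fun m => hL _ (hQL m), hQ_disj,
    fun e => (hL_edges e).symm.trans (hQ_edges e)⟩

/-- If `P` is an `s`-`t` path and `F ⊆ E \ E(P)` is inclusion-minimal such that `P ∪ F`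
contains two internally disjoint `s`-`t` paths, then every node `v ∉ V(P)` has degree `0`
or `2` in `F`, and `F` partitions into attachment paths (paths with both endpoints on `P`
and no internal node on `P`, pairwise edge-disjoint, whose union of edges is `F`). -/
theorem stmt1 {V : Type*} [DecidableEq V] (G : SimpleGraph V) (s t : V)
    (P : G.Walk s t) (hP : P.IsPath)
    (F : Finset (Sym2 V)) (hFE : ↑F ⊆ G.edgeSet) (hdisj : ∀ e ∈ F, e ∉ P.edges)
    (hF : TwoDisjointPaths (fromEdgeSet ((↑F : Set (Sym2 V)) ∪ {e | e ∈ P.edges})) s t)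
    (hmin : ∀ F' ⊂ F,
      ¬ TwoDisjointPaths (fromEdgeSet ((↑F' : Set (Sym2 V)) ∪ {e | e ∈ P.edges})) s t) :
    (∀ v, v ∉ P.support →
      (F.filter (fun e => v ∈ e)).card = 0 ∨ (F.filter (fun e => v ∈ e)).card = 2) ∧
    ∃ (k : ℕ) (u w : Fin k → V)
      (Q : ∀ m : Fin k, (fromEdgeSet (↑F : Set (Sym2 V))).Walk (u m) (w m)),
      (∀ m, (Q m).IsPath ∧ u m ∈ P.support ∧ w m ∈ P.support ∧
        ∀ x ∈ (Q m).support, x ≠ u m → x ≠ w m → x ∉ P.support) ∧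
      (∀ m m', m ≠ m' → ∀ e ∈ (Q m).edges, e ∉ (Q m').edges) ∧
      (∀ e, e ∈ F ↔ ∃ m, e ∈ (Q m).edges) :=
  stmt1_general G s t P F hF hmin
end

section
/- Let G = (V,E) be a graph with activation costs c_e^u, c_e^v ≥ 0 for each edge e = uv, and suppose c_e^s = 0 and c_e^t = 0 for every edge incident to s or t respectively. If F* is an edge set forming two internally disjoint s–t paths P₁, P₂, then min(ℓ_{P₁}(V), ℓ_{P₂}(V)) ≤ (1/2)·ℓ_{F*}(V), where ℓ_F(v) = max_{e ∈ δ_F(v)} c_e^v and ℓ_F(V) = Σ_{v∈V} ℓ_F(v). -/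
open SimpleGraph

open Classical in
/-- `ℓ_F(v) = max { c_e^v : e ∈ δ_F(v) }`, the activation cost incurred by `F` at `v`
(`0` if no edge of `F` is incident to `v`). -/
noncomputable def ell {V : Type*} (c : Sym2 V → V → NNReal) (F : Finset (Sym2 V)) (v : V) :
    NNReal :=
  (F.filter (fun e => v ∈ e)).sup (fun e => c e v)

/-! Since the two paths meet only at `s` and `t`, where all costs vanish, at every vertex at most
one of `ℓ_{P₁}(v)`, `ℓ_{P₂}(v)` is nonzero. Hence `ℓ_{P₁}(v) + ℓ_{P₂}(v) = ℓ_{P₁}(v) ⊔ ℓ_{P₂}(v)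
= ℓ_{F*}(v)`, so `ℓ_{P₁}(V) + ℓ_{P₂}(V) ≤ ℓ_{F*}(V)` and the smaller summand is at most half. -/

theorem min_le_half_of_add_le {α : Type*} [Semifield α] [LinearOrder α] [IsStrictOrderedRing α]
    {a b c : α} (h : a + b ≤ c) : min a b ≤ 1 / 2 * c := by
  rw [one_div, ← div_eq_inv_mul, le_div_iff₀ two_pos, mul_two]
  exact (add_le_add (min_le_left a b) (min_le_right a b)).trans h

section ell

variable {V : Type*} (c : Sym2 V → V → NNReal)

theorem ell_eq_zero_iff {F : Finset (Sym2 V)} {v : V} :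
    ell c F v = 0 ↔ ∀ e ∈ F, v ∈ e → c e v = 0 := by
  rw [ell, ← bot_eq_zero', Finset.sup_eq_bot_iff]
  simp [bot_eq_zero']

theorem ell_union [DecidableEq V] (F F' : Finset (Sym2 V)) (v : V) :
    ell c (F ∪ F') v = ell c F v ⊔ ell c F' v := by
  simp [ell, Finset.filter_union, Finset.sup_union]

theorem sum_ell_add_sum_ell_le_sum_ell_union [Fintype V] [DecidableEq V]
    {F F' : Finset (Sym2 V)} (h : ∀ v, ell c F v = 0 ∨ ell c F' v = 0) :
    ∑ v, ell c F v + ∑ v, ell c F' v ≤ ∑ v, ell c (F ∪ F') v := by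
  rw [← Finset.sum_add_distrib]
  gcongr with v
  rw [ell_union]
  rcases h v with h | h <;> simp [h]

variable [DecidableEq V] {G : SimpleGraph V} {u w : V}

theorem ell_edges_eq_zero_of_notMem_support (p : G.Walk u w) {v : V} (hv : v ∉ p.support) :
    ell c p.edges.toFinset v = 0 :=
  (ell_eq_zero_iff c).2 fun _ he hve ↦
    (hv (Walk.mem_support_of_mem_edges (List.mem_toFinset.1 he) hve)).elim

theorem ell_edges_eq_zero_of_cost_eq_zero (p : G.Walk u w) {v : V}
    (hv : ∀ e ∈ G.edgeSet, v ∈ e → c e v = 0) :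
    ell c p.edges.toFinset v = 0 :=
  (ell_eq_zero_iff c).2 fun _ he ↦ hv _ (p.edges_subset_edgeSet (List.mem_toFinset.1 he))

end ell

theorem stmt2_general {V : Type*} [Fintype V] [DecidableEq V] (G : SimpleGraph V) (s t : V)
    (c : Sym2 V → V → NNReal)
    (hs : ∀ e ∈ G.edgeSet, s ∈ e → c e s = 0) (ht : ∀ e ∈ G.edgeSet, t ∈ e → c e t = 0)
    (p q : G.Walk s t)
    (hdisj : ∀ v, v ∈ p.support → v ∈ q.support → v = s ∨ v = t) :
    min (∑ v, ell c p.edges.toFinset v) (∑ v, ell c q.edges.toFinset v)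
      ≤ (1 / 2) * ∑ v, ell c (p.edges.toFinset ∪ q.edges.toFinset) v := by
  have hzero : ∀ v, ell c p.edges.toFinset v = 0 ∨ ell c q.edges.toFinset v = 0 := by
    intro v
    by_cases hvp : v ∈ p.support
    · by_cases hvq : v ∈ q.support
      · rcases hdisj v hvp hvq with rfl | rfl
        · exact .inl (ell_edges_eq_zero_of_cost_eq_zero c p hs)
        · exact .inr (ell_edges_eq_zero_of_cost_eq_zero c q ht)
      · exact .inr (ell_edges_eq_zero_of_notMem_support c q hvq)
    · exact .inl (ell_edges_eq_zero_of_notMem_support c p hvp)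
  exact min_le_half_of_add_le (sum_ell_add_sum_ell_le_sum_ell_union c hzero)

/-- If the activation costs at `s` and `t` are zero and `F* = P₁ ∪ P₂` is a union of two
internally disjoint `s`-`t` paths, then the cheaper path has activation cost at most
half of `ℓ_{F*}(V)`. -/
theorem stmt2 {V : Type*} [Fintype V] [DecidableEq V] (G : SimpleGraph V) (s t : V)
    (hst : s ≠ t) (c : Sym2 V → V → NNReal)
    (hs : ∀ e ∈ G.edgeSet, s ∈ e → c e s = 0) (ht : ∀ e ∈ G.edgeSet, t ∈ e → c e t = 0)
    (p q : G.Walk s t) (hp : p.IsPath) (hq : q.IsPath)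
    (hdisj : ∀ v, v ∈ p.support → v ∈ q.support → v = s ∨ v = t) :
    min (∑ v, ell c p.edges.toFinset v) (∑ v, ell c q.edges.toFinset v)
      ≤ (1 / 2) * ∑ v, ell c (p.edges.toFinset ∪ q.edges.toFinset) v :=
  stmt2_general G s t c hs ht p q hdisj
end

section
/- Let V = {0,1,…,n}, let P be the Hamiltonian path 0−1−⋯−n, and let E be a set of extra edges, each written as (x,y) with x < y. For 0 ≤ i < j < n, let 𝓕_{i,j} be the family of inclusion-minimal edge sets F ⊆ E such that P ∪ F contains two internally disjoint (j−1, n)-paths and every edge (x,y) ∈ F satisfies x ≥ i. Then F ∈ 𝓕_{i,j} if and only if there exists i ≤ x < j such that exactly one of the following holds: (i) F = {(x,n)}; (ii) F = {(x,y)} ∪ F' for some edge (x,y) ∈ E with i ≤ x < j < y < n and F' ∈ 𝓕_{j,y}. -/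
open SimpleGraph

/-- The edges of the Hamiltonian path `P = 0 - 1 - ⋯ - n`. -/
def pathEdges (n : ℕ) : Set (Sym2 ℕ) := {e | ∃ k, k < n ∧ e = s(k, k + 1)}

/-- The edges corresponding to a set of chords `(x, y)` with `x < y`. -/
def chordSet (F : Finset (ℕ × ℕ)) : Set (Sym2 ℕ) := {e | ∃ p ∈ F, e = s(p.1, p.2)}

/-- The graph `P ∪ F` on `{0, …, n}`. -/
def graphOf (n : ℕ) (F : Finset (ℕ × ℕ)) : SimpleGraph ℕ :=
  SimpleGraph.fromEdgeSet (pathEdges n ∪ chordSet F)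

/-- The family `𝓕_{i,j}`: inclusion-minimal chord sets `F ⊆ E` such that `P ∪ F` contains
two internally disjoint `(j-1, n)`-paths, with every chord `(x,y) ∈ F` satisfying `x ≥ i`. -/
def Fam (n : ℕ) (Ech : Finset (ℕ × ℕ)) (i j : ℕ) : Set (Finset (ℕ × ℕ)) :=
  {F | F ⊆ Ech ∧ (∀ p ∈ F, i ≤ p.1) ∧
    TwoDisjointPaths (graphOf n F) (j - 1) n ∧
    ∀ F' ⊂ F, ¬ TwoDisjointPaths (graphOf n F') (j - 1) n}

lemma graphOf_adj {n : ℕ} {F : Finset (ℕ × ℕ)} {u v : ℕ} :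
    (graphOf n F).Adj u v ↔ (s(u,v) ∈ pathEdges n ∪ chordSet F) ∧ u ≠ v := by
  simp only [graphOf, fromEdgeSet_adj, Set.mem_union]

lemma graphOf_adj_path {n : ℕ} {F : Finset (ℕ × ℕ)} {k : ℕ} (hk : k < n) :
    (graphOf n F).Adj k (k + 1) := by
  rw [graphOf_adj]
  exact ⟨Or.inl ⟨k, hk, rfl⟩, by omega⟩

lemma graphOf_adj_chord {n : ℕ} {F : Finset (ℕ × ℕ)} {p : ℕ × ℕ} (hp : p ∈ F)
    (hlt : p.1 < p.2) : (graphOf n F).Adj p.1 p.2 := by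
  rw [graphOf_adj]
  exact ⟨Or.inr ⟨p, hp, rfl⟩, by omega⟩

/-- Cut lemma: an uncovered vertex `c` lies on every walk passing it. -/
lemma cut_mem {n : ℕ} {F : Finset (ℕ × ℕ)} (hF : ∀ p ∈ F, p.1 < p.2)
    {c : ℕ} (hc : ∀ p ∈ F, ¬(p.1 < c ∧ c < p.2)) :
    ∀ {u v : ℕ} (w : (graphOf n F).Walk u v), u ≤ c → c ≤ v → c ∈ w.support := by
  intro u v w
  induction w with
  | nil =>
    intro h1 h2
    simp only [Walk.support_nil, List.mem_singleton]
    omega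
  | @cons u b v h w ih =>
    intro h1 h2
    rcases eq_or_lt_of_le h1 with rfl | hlt
    · simp
    have hb : b ≤ c := by
      rcases (graphOf_adj.mp h).1 with ⟨k, hk, he⟩ | ⟨p, hp, he⟩
      · rw [Sym2.eq_iff] at he
        omega
      · rw [Sym2.eq_iff] at he
        have h3 := hF p hp
        have h4 := hc p hp
        omega
    simp only [Walk.support_cons, List.mem_cons]
    exact Or.inr (ih hb h2)

lemma cov_of_tdp {n : ℕ} {F : Finset (ℕ × ℕ)} (hF : ∀ p ∈ F, p.1 < p.2)
    {a : ℕ} (h : TwoDisjointPaths (graphOf n F) a n) :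
    ∀ c, a < c → c < n → ∃ p ∈ F, p.1 < c ∧ c < p.2 := by
  intro c h1 h2
  by_contra hcon
  push_neg at hcon
  obtain ⟨p, q, hp, hq, hdisj⟩ := h
  have hc : ∀ p ∈ F, ¬(p.1 < c ∧ c < p.2) := by
    intro r hr hr2
    exact absurd hr2.2 (not_lt.mpr (hcon r hr hr2.1))
  have h3 := cut_mem hF hc p (by omega) (by omega)
  have h4 := cut_mem hF hc q (by omega) (by omega)
  rcases hdisj c h3 h4 with rfl | rfl <;> omega

/-- ascending path walks along P -/
lemma exists_upWalk {n : ℕ} {F : Finset (ℕ × ℕ)} :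
    ∀ (d a : ℕ), a + d ≤ n →
    ∃ w : (graphOf n F).Walk a (a + d), w.IsPath ∧
      ∀ v, v ∈ w.support ↔ (a ≤ v ∧ v ≤ a + d) := by
  intro d
  induction d with
  | zero =>
    intro a _
    exact ⟨Walk.nil, by simp, by simp; omega⟩
  | succ d ih =>
    intro a h
    obtain ⟨w, hw, hsup⟩ := ih (a + 1) (by omega)
    have hadj : (graphOf n F).Adj a (a + 1) := graphOf_adj_path (by omega)
    refine ⟨(Walk.cons hadj w).copy rfl (by omega), ?_, ?_⟩
    · rw [Walk.isPath_copy]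
      refine hw.cons ?_
      rw [hsup]
      omega
    · intro v
      rw [Walk.support_copy]
      simp only [Walk.support_cons, List.mem_cons, hsup]
      omega

lemma exists_pWalk {n : ℕ} {F : Finset (ℕ × ℕ)} (a b : ℕ) (hab : a ≤ b) (hb : b ≤ n) :
    ∃ w : (graphOf n F).Walk a b, w.IsPath ∧ ∀ v, v ∈ w.support ↔ (a ≤ v ∧ v ≤ b) := by
  obtain ⟨w, h1, h2⟩ := exists_upWalk (n := n) (F := F) (b - a) a (by omega)
  refine ⟨w.copy rfl (by omega), ?_, ?_⟩
  · rwa [Walk.isPath_copy]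
  · intro v
    rw [Walk.support_copy, h2]
    omega

lemma isPath_append {V : Type*} {G : SimpleGraph V} {u v w : V} {p : G.Walk u v}
    {q : G.Walk v w} (hp : p.IsPath) (hq : q.IsPath)
    (h : ∀ z, z ∈ p.support → z ∈ q.support → z = v) : (p.append q).IsPath := by
  rw [Walk.isPath_def, Walk.support_append]
  refine List.Nodup.append hp.support_nodup
    (hq.support_nodup.sublist (List.tail_sublist _)) ?_
  intro z hzp hzq
  have hzq' : z ∈ q.support := List.mem_of_mem_tail hzq
  have hz := h z hzp hzq'
  subst hz
  have hnd := hq.support_nodup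
  rw [q.support_eq_cons] at hnd
  exact (List.nodup_cons.mp hnd).1 hzq

/-- Main construction: from a covering of `(a,n)` build the two path "halves". -/
lemma Cplus {n : ℕ} : ∀ (k a : ℕ) (F : Finset (ℕ × ℕ)),
    n - a ≤ k → a + 1 < n → (∀ p ∈ F, p.1 < p.2 ∧ p.2 ≤ n) →
    (∀ c, a < c → c < n → ∃ p ∈ F, p.1 < c ∧ c < p.2) →
    ∃ x y, (x, y) ∈ F ∧ x ≤ a ∧ a + 1 < y ∧
      ∃ (C : (graphOf n F).Walk x n) (D : (graphOf n F).Walk (a+1) n),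
        C.IsPath ∧ D.IsPath ∧ (∀ w ∈ C.support, w = x ∨ a + 1 ≤ w) ∧
        (∀ w ∈ D.support, a + 1 ≤ w) ∧
        (∀ w, w ∈ C.support → w ∈ D.support → w = n) := by
  intro k
  induction k with
  | zero => intro a F hk ha _ _; omega
  | succ k ih =>
    intro a F hk ha hF hcov
    have hne : (F.filter (fun p => p.1 < a + 1 ∧ a + 1 < p.2)).Nonempty := by
      obtain ⟨p, hp, h1, h2⟩ := hcov (a+1) (by omega) ha
      exact ⟨p, Finset.mem_filter.mpr ⟨hp, by omega, h2⟩⟩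
    obtain ⟨e, he, hemax⟩ := Finset.exists_max_image _ (fun p => p.2) hne
    rw [Finset.mem_filter] at he
    obtain ⟨heF, hex, hey⟩ := he
    have heF' : (e.1, e.2) ∈ F := by rwa [Prod.mk.eta]
    by_cases hyn : e.2 = n
    · -- base case: a chord jumping to n
      obtain ⟨D, hD, hDs⟩ := exists_pWalk (n := n) (F := F) (a+1) n (by omega) le_rfl
      have hadj : (graphOf n F).Adj e.1 n := by
        have := graphOf_adj_chord (n := n) heF (hF e heF).1
        rwa [hyn] at this
      refine ⟨e.1, e.2, heF', by omega, by omega, Walk.cons hadj Walk.nil, D, ?_, hD, ?_, ?_, ?_⟩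
      · simp [Walk.isPath_def]
        omega
      · intro w hw
        simp only [Walk.support_cons, Walk.support_nil, List.mem_cons,
          List.mem_singleton] at hw
        rcases hw with rfl | rfl | h
        · exact Or.inl rfl
        · omega
        · simp at h
      · intro w hw
        exact ((hDs w).mp hw).1
      · intro w hw hw2
        simp only [Walk.support_cons, Walk.support_nil, List.mem_cons,
          List.mem_singleton] at hw
        have := (hDs w).mp hw2
        rcases hw with rfl | rfl | h
        · omega
        · rfl
        · simp at h
    · -- recursive case
      have hyn' : e.2 < n := lt_of_le_of_ne (hF e heF).2 hyn
      obtain ⟨x', y', hx'F, hx'le, hy'gt, C', D', hC', hD', hC's, hD's, hCD'⟩ :=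
        ih (e.2 - 1) F (by omega) (by omega) hF (fun c h1 h2 => hcov c (by omega) h2)
      have hx'ge : a + 1 ≤ x' := by
        by_contra hcon
        have hmem : (x', y') ∈ F.filter (fun p => p.1 < a + 1 ∧ a + 1 < p.2) :=
          Finset.mem_filter.mpr ⟨hx'F, by omega, by omega⟩
        have := hemax _ hmem
        simp only at this
        omega
      -- D' : Walk (e.2 - 1 + 1) n ; fix endpoint to e.2
      have hcopy : e.2 - 1 + 1 = e.2 := by omega
      set D2 : (graphOf n F).Walk e.2 n := D'.copy hcopy rfl with hD2def
      have hD2 : D2.IsPath := by rw [hD2def, Walk.isPath_copy]; exact hD'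
      have hD2s : ∀ w ∈ D2.support, e.2 ≤ w := by
        intro w hw
        rw [hD2def, Walk.support_copy] at hw
        have := hD's w hw
        omega
      have hadj : (graphOf n F).Adj e.1 e.2 := graphOf_adj_chord heF (hF e heF).1
      -- new C : from e.1 through the chord, then D2
      set Cn : (graphOf n F).Walk e.1 n := Walk.cons hadj D2 with hCndef
      -- new D : ascend from a+1 to x', then C'
      obtain ⟨P1, hP1, hP1s⟩ := exists_pWalk (n := n) (F := F) (a+1) x' hx'ge (by omega)
      set Dn : (graphOf n F).Walk (a+1) n := P1.append C' with hDndef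
      refine ⟨e.1, e.2, heF', by omega, by omega, Cn, Dn, ?_, ?_, ?_, ?_, ?_⟩
      · refine hD2.cons ?_
        intro hmem
        have := hD2s _ hmem
        omega
      · refine isPath_append hP1 hC' ?_
        intro z hz1 hz2
        have h1 := (hP1s z).mp hz1
        rcases hC's z hz2 with rfl | h2
        · rfl
        · omega
      · intro w hw
        rw [hCndef, Walk.support_cons] at hw
        rcases List.mem_cons.mp hw with rfl | hw2
        · exact Or.inl rfl
        · have := hD2s w hw2; omega
      · intro w hw
        rw [hDndef] at hw
        rcases (Walk.mem_support_append_iff _ _).mp hw with h1 | h2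
        · exact ((hP1s w).mp h1).1
        · rcases hC's w h2 with rfl | h
          · omega
          · omega
      · intro w hw1 hw2
        rw [hCndef, Walk.support_cons] at hw1
        rw [hDndef] at hw2
        rcases (Walk.mem_support_append_iff _ _).mp hw2 with h2 | h2
        · have h2' := (hP1s w).mp h2
          rcases List.mem_cons.mp hw1 with rfl | hw3
          · omega
          · have := hD2s w hw3; omega
        · rcases List.mem_cons.mp hw1 with heq | hw3
          · rcases hC's w h2 with heq2 | h
            · omega
            · omega
          · refine hCD' w h2 ?_
            rw [hD2def, Walk.support_copy] at hw3
            exact hw3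

lemma tdp_of_cov {n : ℕ} {F : Finset (ℕ × ℕ)} (hF : ∀ p ∈ F, p.1 < p.2 ∧ p.2 ≤ n)
    {a : ℕ} (ha : a < n) (hcov : ∀ c, a < c → c < n → ∃ p ∈ F, p.1 < c ∧ c < p.2) :
    TwoDisjointPaths (graphOf n F) a n := by
  by_cases h1 : a + 1 = n
  · have hadj : (graphOf n F).Adj a n := by
      have := graphOf_adj_path (n := n) (F := F) (k := a) ha
      rwa [h1] at this
    refine ⟨Walk.cons hadj Walk.nil, Walk.cons hadj Walk.nil, ?_, ?_, ?_⟩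
    · simp [Walk.isPath_def]; omega
    · simp [Walk.isPath_def]; omega
    · intro v hv _
      simp only [Walk.support_cons, Walk.support_nil, List.mem_cons, List.mem_singleton] at hv
      rcases hv with rfl | rfl | h
      · exact Or.inl rfl
      · exact Or.inr rfl
      · simp at h
  · obtain ⟨x, y, hxy, hx, hy, C, D, hC, hD, hCs, hDs, hCD⟩ :=
      Cplus (n - a) a F le_rfl (by omega) hF hcov
    obtain ⟨P0, hP0, hP0s⟩ := exists_pWalk (n := n) (F := F) x a hx (by omega)
    have hadj : (graphOf n F).Adj a (a+1) := graphOf_adj_path (by omega)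
    refine ⟨P0.reverse.append C, Walk.cons hadj D, ?_, ?_, ?_⟩
    · refine isPath_append (hP0.reverse) hC ?_
      intro z hz1 hz2
      rw [Walk.support_reverse, List.mem_reverse] at hz1
      have h2 := (hP0s z).mp hz1
      rcases hCs z hz2 with rfl | h3
      · rfl
      · omega
    · refine hD.cons ?_
      intro hmem
      have := hDs a hmem
      omega
    · intro v hv1 hv2
      simp only [Walk.support_cons, List.mem_cons] at hv2
      rcases hv2 with rfl | hv2
      · exact Or.inl rfl
      · have hvge := hDs v hv2
        rcases (Walk.mem_support_append_iff _ _).mp hv1 with h2 | h2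
        · rw [Walk.support_reverse, List.mem_reverse] at h2
          have := (hP0s v).mp h2
          omega
        · rcases hCs v h2 with rfl | h3
          · omega
          · exact Or.inr (hCD v h2 hv2)

/-- `Cov n F j`: the chords of `F` cover every `c` with `j ≤ c < n`. -/
def Cov (n : ℕ) (F : Finset (ℕ × ℕ)) (j : ℕ) : Prop :=
  ∀ c, j ≤ c → c < n → ∃ p ∈ F, p.1 < c ∧ c < p.2

lemma tdp_iff_cov {n : ℕ} {F : Finset (ℕ × ℕ)} (hF : ∀ p ∈ F, p.1 < p.2 ∧ p.2 ≤ n)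
    {j : ℕ} (hj : 1 ≤ j) (hjn : j ≤ n) :
    TwoDisjointPaths (graphOf n F) (j - 1) n ↔ Cov n F j := by
  constructor
  · intro h c h1 h2
    exact cov_of_tdp (fun p hp => (hF p hp).1) h c (by omega) h2
  · intro h
    refine tdp_of_cov hF (by omega) ?_
    intro c h1 h2
    exact h c (by omega) h2

lemma fam_iff {n : ℕ} {Ech : Finset (ℕ × ℕ)} (hE : ∀ p ∈ Ech, p.1 < p.2 ∧ p.2 ≤ n)
    {i j : ℕ} (hj : 1 ≤ j) (hjn : j ≤ n) {F : Finset (ℕ × ℕ)} :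
    F ∈ Fam n Ech i j ↔ F ⊆ Ech ∧ (∀ p ∈ F, i ≤ p.1) ∧ Cov n F j ∧
      ∀ F' ⊂ F, ¬ Cov n F' j := by
  constructor
  · rintro ⟨h1, h2, h3, h4⟩
    refine ⟨h1, h2, ?_, ?_⟩
    · exact (tdp_iff_cov (fun p hp => hE p (h1 hp)) hj hjn).mp h3
    · intro F' hF' hc
      exact h4 F' hF' ((tdp_iff_cov (fun p hp => hE p (h1 (hF'.1 hp))) hj hjn).mpr hc)
  · rintro ⟨h1, h2, h3, h4⟩
    refine ⟨h1, h2, ?_, ?_⟩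
    · exact (tdp_iff_cov (fun p hp => hE p (h1 hp)) hj hjn).mpr h3
    · intro F' hF' ht
      exact h4 F' hF' ((tdp_iff_cov (fun p hp => hE p (h1 (hF'.1 hp))) hj hjn).mp ht)

/-- Recursive characterization of `𝓕_{i,j}`: `F ∈ 𝓕_{i,j}` iff there is `i ≤ x < j` such
that exactly one of the following holds: (i) `F = {(x,n)}`; (ii) `F = {(x,y)} ∪ F'` for
some chord `(x,y)` with `i ≤ x < j < y < n` and `F' ∈ 𝓕_{j,y}`. -/
theorem stmt6 (n : ℕ) (Ech : Finset (ℕ × ℕ)) (hE : ∀ p ∈ Ech, p.1 < p.2 ∧ p.2 ≤ n)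
    (i j : ℕ) (hij : i < j) (hjn : j < n) (F : Finset (ℕ × ℕ)) :
    F ∈ Fam n Ech i j ↔ ∃ x, i ≤ x ∧ x < j ∧
      Xor' (F = {(x, n)} ∧ (x, n) ∈ Ech)
        (∃ y F', j < y ∧ y < n ∧ (x, y) ∈ Ech ∧ F' ∈ Fam n Ech j y ∧
          F = insert (x, y) F') := by
  have hj1 : 1 ≤ j := by omega
  constructor
  · intro hF
    rw [fam_iff hE hj1 (by omega)] at hF
    obtain ⟨h1, h2, h3, h4⟩ := hF
    have hEF : ∀ p ∈ F, p.1 < p.2 ∧ p.2 ≤ n := fun p hp => hE p (h1 hp)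
    -- pick the chord covering j with maximal right endpoint
    have hne : (F.filter (fun p => p.1 < j ∧ j < p.2)).Nonempty := by
      obtain ⟨p, hp, hp1, hp2⟩ := h3 j le_rfl hjn
      exact ⟨p, Finset.mem_filter.mpr ⟨hp, hp1, hp2⟩⟩
    obtain ⟨e, he, hemax⟩ := Finset.exists_max_image _ (fun p => p.2) hne
    rw [Finset.mem_filter] at he
    obtain ⟨heF, hex, hey⟩ := he
    have heE := hEF e heF
    -- every other chord of F has left endpoint ≥ j
    have huniq : ∀ p ∈ F, p ≠ e → j ≤ p.1 := by
      intro p hp hpe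
      by_contra hcon
      push_neg at hcon
      refine h4 (F.erase p) (Finset.erase_ssubset hp) ?_
      intro c hc1 hc2
      obtain ⟨q, hq, hq1, hq2⟩ := h3 c hc1 hc2
      by_cases hqp : q = p
      · subst hqp
        have hq2j : j < q.2 := by omega
        have hqS : q ∈ F.filter (fun p => p.1 < j ∧ j < p.2) :=
          Finset.mem_filter.mpr ⟨hq, hcon, hq2j⟩
        have hqle := hemax q hqS
        refine ⟨e, Finset.mem_erase.mpr ⟨fun h => hpe h.symm, heF⟩, by omega, by omega⟩
      · exact ⟨q, Finset.mem_erase.mpr ⟨hqp, hq⟩, hq1, hq2⟩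
    by_cases hn : e.2 = n
    · -- case (i)
      have hFe : F = {e} := by
        by_contra hne'
        refine h4 {e} (lt_of_le_of_ne (Finset.singleton_subset_iff.mpr heF)
          (fun h => hne' h.symm)) ?_
        intro c hc1 hc2
        exact ⟨e, Finset.mem_singleton_self e, by omega, by omega⟩
      refine ⟨e.1, h2 e heF, hex, Or.inl ⟨⟨?_, ?_⟩, ?_⟩⟩
      · rw [hFe]
        congr 1
        rw [← hn]
      · have := h1 heF
        rwa [← hn, Prod.mk.eta]
      · rintro ⟨y, F', hy1, hy2, _, _, hFeq⟩
        have : (e.1, y) ∈ F := by rw [hFeq]; exact Finset.mem_insert_self _ _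
        rw [hFe, Finset.mem_singleton] at this
        have : y = e.2 := by rw [← this]
        omega
    · -- case (ii)
      have hn' : e.2 < n := lt_of_le_of_ne heE.2 hn
      set F' := F.erase e with hF'def
      have hf'cov : Cov n F' e.2 := by
        intro c hc1 hc2
        obtain ⟨q, hq, hq1, hq2⟩ := h3 c (by omega) hc2
        have hqe : q ≠ e := by
          intro h
          subst h
          omega
        exact ⟨q, Finset.mem_erase.mpr ⟨hqe, hq⟩, hq1, hq2⟩
      have hf'min : ∀ F'' ⊂ F', ¬ Cov n F'' e.2 := by
        intro F'' hF'' hcov''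
        obtain ⟨z, hzF', hzF''⟩ := Finset.exists_of_ssubset hF''
        refine h4 (insert e F'') ?_ ?_
        · have hsub : insert e F'' ⊆ F := by
            intro w hw
            rcases Finset.mem_insert.mp hw with rfl | hw2
            · exact heF
            · exact (Finset.erase_subset _ _) (hF''.1 hw2)
          refine lt_of_le_of_ne hsub ?_
          intro hcontra
          have hzmem : z ∈ insert e F'' := by rw [hcontra]; exact (Finset.erase_subset _ _) hzF'
          rcases Finset.mem_insert.mp hzmem with rfl | hzz
          · exact (Finset.mem_erase.mp hzF').1 rfl
          · exact hzF'' hzz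
        · intro c hc1 hc2
          by_cases hcy : c < e.2
          · exact ⟨e, Finset.mem_insert_self _ _, by omega, by omega⟩
          · obtain ⟨q, hq, hq1, hq2⟩ := hcov'' c (by omega) hc2
            exact ⟨q, Finset.mem_insert_of_mem hq, hq1, hq2⟩
      have hfam : F' ∈ Fam n Ech j e.2 := by
        rw [fam_iff hE (by omega) (by omega)]
        refine ⟨fun p hp => h1 ((Finset.erase_subset _ _) hp), ?_, hf'cov, hf'min⟩
        intro p hp
        exact huniq p ((Finset.erase_subset _ _) hp) (Finset.mem_erase.mp hp).1
      refine ⟨e.1, h2 e heF, hex, Or.inr ⟨⟨e.2, F', hey, hn', ?_, hfam, ?_⟩, ?_⟩⟩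
      · have := h1 heF
        rwa [Prod.mk.eta]
      · rw [hF'def, Prod.mk.eta, Finset.insert_erase heF]
      · rintro ⟨hFeq, _⟩
        have : e ∈ F := heF
        rw [hFeq, Finset.mem_singleton] at this
        have : e.2 = n := by rw [this]
        omega
  · rintro ⟨x, hxi, hxj, hxor⟩
    rcases hxor with ⟨⟨hFeq, hxE⟩, _⟩ | ⟨⟨y, F', hy1, hy2, hxyE, hF', hFeq⟩, _⟩
    · rw [fam_iff hE hj1 (by omega)]
      refine ⟨by rw [hFeq]; simp [hxE], ?_, ?_, ?_⟩
      · intro p hp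
        rw [hFeq, Finset.mem_singleton] at hp
        subst hp
        exact hxi
      · intro c hc1 hc2
        refine ⟨(x, n), by rw [hFeq]; exact Finset.mem_singleton_self _, by omega, by omega⟩
      · intro F'' hF'' hcov''
        rw [hFeq] at hF''
        have : F'' = ∅ := Finset.eq_empty_of_ssubset_singleton hF''
        subst this
        obtain ⟨q, hq, _, _⟩ := hcov'' j le_rfl hjn
        exact absurd hq (Finset.notMem_empty q)
    · rw [fam_iff hE (by omega) (by omega)] at hF'
      obtain ⟨h1', h2', h3', h4'⟩ := hF'
      have hxny : (x, y) ∉ F' := fun h => by have := h2' _ h; simp at this; omega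
      rw [fam_iff hE hj1 (by omega)]
      refine ⟨?_, ?_, ?_, ?_⟩
      · rw [hFeq]
        exact Finset.insert_subset hxyE h1'
      · intro p hp
        rw [hFeq] at hp
        rcases Finset.mem_insert.mp hp with rfl | hp2
        · exact hxi
        · have := h2' p hp2; omega
      · intro c hc1 hc2
        by_cases hcy : c < y
        · exact ⟨(x, y), by rw [hFeq]; exact Finset.mem_insert_self _ _, by omega, by omega⟩
        · obtain ⟨q, hq, hq1, hq2⟩ := h3' c (by omega) hc2
          exact ⟨q, by rw [hFeq]; exact Finset.mem_insert_of_mem hq, hq1, hq2⟩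
      · intro F'' hF'' hcov''
        by_cases hmem : (x, y) ∈ F''
        · have hsub : F''.erase (x, y) ⊂ F' := by
            obtain ⟨z, hzF, hzF''⟩ := Finset.exists_of_ssubset hF''
            have hzxy : z ≠ (x, y) := fun h => hzF'' (h ▸ hmem)
            have hzF' : z ∈ F' := by
              rw [hFeq] at hzF
              rcases Finset.mem_insert.mp hzF with h | h
              · exact absurd h hzxy
              · exact h
            have hsub' : F''.erase (x, y) ⊆ F' := by
              intro w hw
              obtain ⟨hw1, hw2⟩ := Finset.mem_erase.mp hw
              have := hF''.1 hw2
              rw [hFeq] at this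
              rcases Finset.mem_insert.mp this with h | h
              · exact absurd h hw1
              · exact h
            exact (Finset.ssubset_iff_of_subset hsub').mpr
              ⟨z, hzF', fun hmem' => hzF'' ((Finset.erase_subset _ _) hmem')⟩
          refine h4' _ hsub ?_
          intro c hc1 hc2
          obtain ⟨q, hq, hq1, hq2⟩ := hcov'' c (by omega) hc2
          have hqxy : q ≠ (x, y) := by
            intro h
            subst h
            simp at hq1 hq2
            omega
          exact ⟨q, Finset.mem_erase.mpr ⟨hqxy, hq⟩, hq1, hq2⟩
        · have hsub : F'' ⊆ F' := by
            intro w hw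
            have := hF''.1 hw
            rw [hFeq] at this
            rcases Finset.mem_insert.mp this with rfl | h
            · exact absurd hw hmem
            · exact h
          obtain ⟨q, hq, hq1, _⟩ := hcov'' j le_rfl hjn
          have := h2' q (hsub hq)
          omega
end

section
/- With V = {0,…,n} and P = 0−⋯−n a Hamiltonian path, if F is an inclusion-minimal edge set such that P ∪ F contains two internally disjoint (j−1,n)-paths (j < n) and |F| ≥ 2, then F contains an edge (x,y) with x < j < y. -/
open SimpleGraph

/-- If `F` is inclusion-minimal such that `P ∪ F` contains two internally disjoint
`(j-1, n)`-paths, `0 < j < n`, and `|F| ≥ 2`, then `F` contains a chord `(x,y)` with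
`x < j < y`. -/
theorem stmt8 (n j : ℕ) (hj0 : 0 < j) (hjn : j < n)
    (Ech : Finset (ℕ × ℕ)) (hE : ∀ p ∈ Ech, p.1 < p.2 ∧ p.2 ≤ n)
    (F : Finset (ℕ × ℕ)) (hFE : F ⊆ Ech)
    (hF : TwoDisjointPaths (graphOf n F) (j - 1) n)
    (hmin : ∀ F' ⊂ F, ¬ TwoDisjointPaths (graphOf n F') (j - 1) n)
    (hcard : 2 ≤ F.card) :
    ∃ p ∈ F, p.1 < j ∧ j < p.2 := by
  obtain ⟨p, q, hp, hq, hdisj⟩ := hF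
  have key : ∀ (u v : ℕ) (w : (graphOf n F).Walk u v), u < j → j < v → j ∉ w.support →
      ∃ p ∈ F, p.1 < j ∧ j < p.2 := by
    intro u v w
    induction w with
    | nil => intro hu hv _; omega
    | @cons a b c h w ih =>
      intro hu hv hjsup
      rw [SimpleGraph.Walk.support_cons, List.mem_cons] at hjsup
      push_neg at hjsup
      obtain ⟨hja, hjw⟩ := hjsup
      rcases lt_trichotomy b j with hb | hb | hb
      · exact ih hb hv hjw
      · exact absurd (hb ▸ w.start_mem_support) hjw
      · rw [graphOf, SimpleGraph.fromEdgeSet_adj] at h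
        obtain ⟨hmem, -⟩ := h
        rcases hmem with ⟨k, hk, he⟩ | ⟨e, heF, he⟩
        · rw [Sym2.eq_iff] at he
          omega
        · rw [Sym2.eq_iff] at he
          have := hE e (hFE heF)
          rcases he with ⟨h1, h2⟩ | ⟨h1, h2⟩
          · exact ⟨e, heF, by omega⟩
          · omega
  have hjp : j ∉ p.support ∨ j ∉ q.support := by
    by_contra hc
    push_neg at hc
    have := hdisj j hc.1 hc.2
    omega
  rcases hjp with h | h
  · exact key (j - 1) n p (by omega) hjn h
  · exact key (j - 1) n q (by omega) hjn h
end

section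
/- Optimal value via the DP table: with 𝓕_{0,1} equal to the set of all inclusion-minimal feasible solutions to 3-Cost Hamiltonian Activation 2-DP Augmentation, and f(l_i,l_j) = min_{F ∈ 𝓕_{i,j}} α_F(l_i,l_j), the optimum value opt = min_F τ(F) over feasible F satisfies opt = min_{l₀,l₁ ∈ L} f(l₀,l₁). -/
open SimpleGraph

/-- `ℓ_F(v)`: the activation cost incurred by a chord set `F` at vertex `v`. -/
noncomputable def ellc (ca : ℕ × ℕ → ℕ → NNReal) (F : Finset (ℕ × ℕ)) (v : ℕ) : NNReal :=
  (F.filter (fun p => p.1 = v ∨ p.2 = v)).sup (fun p => ca p v)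

/-- `F ⊆ E(l_i, l_j)`: every edge of `F` incident to `i` (resp. `j`) has activation cost
at `i` (resp. `j`) at most `l_i` (resp. `l_j`). -/
def inE (ca : ℕ × ℕ → ℕ → NNReal) (i j : ℕ) (li lj : NNReal) (F : Finset (ℕ × ℕ)) : Prop :=
  ∀ p ∈ F, ((p.1 = i ∨ p.2 = i) → ca p i ≤ li) ∧ ((p.1 = j ∨ p.2 = j) → ca p j ≤ lj)

open Classical in
/-- The `(l_i, l_j)`-forced cost `α_F(l_i, l_j) = c(F) + ℓ_F(V \ {i,j}) + l_i + l_j` if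
`F ⊆ E(l_i, l_j)`, and `∞` otherwise. -/
noncomputable def alphaDP (n : ℕ) (ca : ℕ × ℕ → ℕ → NNReal) (cm : ℕ × ℕ → NNReal)
    (i j : ℕ) (li lj : NNReal) (F : Finset (ℕ × ℕ)) : ENNReal :=
  if inE ca i j li lj F then
    (((∑ p ∈ F, cm p) + (∑ v ∈ ((Finset.range (n + 1)).erase i).erase j, ellc ca F v)
      + li + lj : NNReal) : ENNReal)
  else ⊤

/-- `f(l_i, l_j) = min_{F ∈ 𝓕_{i,j}} α_F(l_i, l_j)`. -/
noncomputable def fDP (n : ℕ) (Ech : Finset (ℕ × ℕ)) (ca : ℕ × ℕ → ℕ → NNReal)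
    (cm : ℕ × ℕ → NNReal) (i j : ℕ) (li lj : NNReal) : ENNReal :=
  sInf {a | ∃ F ∈ Fam n Ech i j, a = alphaDP n ca cm i j li lj F}

/-- `τ(F) = ℓ_F(V) + c(F)`, the total (activation plus middle) cost of `F`. -/
noncomputable def tauDP (n : ℕ) (ca : ℕ × ℕ → ℕ → NNReal) (cm : ℕ × ℕ → NNReal)
    (F : Finset (ℕ × ℕ)) : NNReal :=
  (∑ v ∈ Finset.range (n + 1), ellc ca F v) + ∑ p ∈ F, cm p

lemma existsMinSub (P : Finset (ℕ × ℕ) → Prop) :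
    ∀ F, P F → ∃ F', F' ⊆ F ∧ P F' ∧ ∀ F'' ⊂ F', ¬ P F'' := by
  intro F
  induction F using Finset.strongInductionOn with
  | _ F ih =>
    intro hF
    by_cases h : ∃ F'' ⊂ F, P F''
    · obtain ⟨F'', hsub, hP⟩ := h
      obtain ⟨F', h1, h2, h3⟩ := ih F'' hsub hP
      exact ⟨F', h1.trans hsub.subset, h2, h3⟩
    · exact ⟨F, subset_refl _, hF, fun F'' hs hP => h ⟨F'', hs, hP⟩⟩

lemma ellc_mono (ca : ℕ × ℕ → ℕ → NNReal) {F F' : Finset (ℕ × ℕ)} (h : F' ⊆ F) (v : ℕ) :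
    ellc ca F' v ≤ ellc ca F v :=
  Finset.sup_mono (Finset.filter_subset_filter _ h)

/-- Optimal value via the DP table: the optimum `min_F τ(F)` over feasible `F` (sets of
chords `F ⊆ E` such that `P ∪ F` contains two internally disjoint `(0,n)`-paths) equals
`min_{l₀, l₁ ∈ L} f(l₀, l₁)`. -/
theorem stmt10 (n : ℕ) (hn : 1 < n) (Ech : Finset (ℕ × ℕ))
    (hE : ∀ p ∈ Ech, p.1 < p.2 ∧ p.2 ≤ n)
    (ca : ℕ × ℕ → ℕ → NNReal) (cm : ℕ × ℕ → NNReal) (L : Finset NNReal)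
    (hL0 : (0 : NNReal) ∈ L) (hLc : ∀ p ∈ Ech, ca p p.1 ∈ L ∧ ca p p.2 ∈ L)
    (hfeas : ∃ F, F ⊆ Ech ∧ TwoDisjointPaths (graphOf n F) 0 n) :
    sInf {a : ENNReal | ∃ F, F ⊆ Ech ∧ TwoDisjointPaths (graphOf n F) 0 n ∧
        a = (tauDP n ca cm F : ENNReal)}
      = sInf {a : ENNReal | ∃ l₀ ∈ L, ∃ l₁ ∈ L, a = fDP n Ech ca cm 0 1 l₀ l₁} := by
  classical
  have h0 : (0 : ℕ) ∈ Finset.range (n + 1) := by simp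
  have h1 : (1 : ℕ) ∈ (Finset.range (n + 1)).erase 0 := by
    simp; omega
  apply le_antisymm
  · apply le_sInf
    rintro a ⟨l₀, hl₀, l₁, hl₁, rfl⟩
    apply le_sInf
    rintro b ⟨F, hF, rfl⟩
    obtain ⟨hFE, -, hTDP, -⟩ := hF
    refine le_trans (sInf_le ⟨F, hFE, hTDP, rfl⟩) ?_
    unfold alphaDP
    split_ifs with h
    · rw [ENNReal.coe_le_coe]
      unfold tauDP
      rw [← Finset.add_sum_erase _ _ h0, ← Finset.add_sum_erase _ _ h1]
      have e0 : ellc ca F 0 ≤ l₀ := by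
        apply Finset.sup_le
        intro p hp
        rw [Finset.mem_filter] at hp
        exact (h p hp.1).1 hp.2
      have e1 : ellc ca F 1 ≤ l₁ := by
        apply Finset.sup_le
        intro p hp
        rw [Finset.mem_filter] at hp
        exact (h p hp.1).2 hp.2
      calc ellc ca F 0 + (ellc ca F 1 + ∑ v ∈ ((Finset.range (n + 1)).erase 0).erase 1,
              ellc ca F v) + ∑ p ∈ F, cm p
          ≤ l₀ + (l₁ + ∑ v ∈ ((Finset.range (n + 1)).erase 0).erase 1, ellc ca F v)
              + ∑ p ∈ F, cm p := by gcongr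
        _ = (∑ p ∈ F, cm p) + (∑ v ∈ ((Finset.range (n + 1)).erase 0).erase 1, ellc ca F v)
              + l₀ + l₁ := by ring
    · exact le_top
  · apply le_sInf
    rintro a ⟨F, hFE, hT, rfl⟩
    obtain ⟨F', hsub, hT', hmin⟩ :=
      existsMinSub (fun G => TwoDisjointPaths (graphOf n G) 0 n) F hT
    have hF'E : F' ⊆ Ech := hsub.trans hFE
    set l₀ := ellc ca F' 0 with hl0d
    set l₁ := ellc ca F' 1 with hl1d
    have hl₀L : l₀ ∈ L := by
      rcases (F'.filter (fun p => p.1 = 0 ∨ p.2 = 0)).eq_empty_or_nonempty with he | hne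
      · have : l₀ = 0 := by rw [hl0d]; unfold ellc; rw [he]; simp
        rw [this]; exact hL0
      · obtain ⟨p, hp, hsup⟩ := Finset.exists_mem_eq_sup _ hne (fun p => ca p 0)
        rw [Finset.mem_filter] at hp
        have hpE := hF'E hp.1
        have hEE := hE p hpE
        have hp1 : p.1 = 0 := by
          obtain ⟨hlt, -⟩ := hEE
          rcases hp.2 with h | h
          · exact h
          · omega
        have : ca p 0 = ca p p.1 := by rw [hp1]
        rw [hl0d]; unfold ellc; rw [hsup, this]
        exact (hLc p hpE).1
    have hl₁L : l₁ ∈ L := by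
      rcases (F'.filter (fun p => p.1 = 1 ∨ p.2 = 1)).eq_empty_or_nonempty with he | hne
      · have : l₁ = 0 := by rw [hl1d]; unfold ellc; rw [he]; simp
        rw [this]; exact hL0
      · obtain ⟨p, hp, hsup⟩ := Finset.exists_mem_eq_sup _ hne (fun p => ca p 1)
        rw [Finset.mem_filter] at hp
        have hpE := hF'E hp.1
        rcases hp.2 with h | h
        · have : ca p 1 = ca p p.1 := by rw [h]
          rw [hl1d]; unfold ellc; rw [hsup, this]
          exact (hLc p hpE).1
        · have : ca p 1 = ca p p.2 := by rw [h]
          rw [hl1d]; unfold ellc; rw [hsup, this]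
          exact (hLc p hpE).2
    have hFam : F' ∈ Fam n Ech 0 1 :=
      ⟨hF'E, fun p _ => Nat.zero_le _, hT', hmin⟩
    have hinE : inE ca 0 1 l₀ l₁ F' := by
      intro p hp
      rw [hl0d, hl1d]
      unfold ellc
      exact ⟨fun h => Finset.le_sup (f := fun q => ca q 0) (Finset.mem_filter.2 ⟨hp, h⟩),
             fun h => Finset.le_sup (f := fun q => ca q 1) (Finset.mem_filter.2 ⟨hp, h⟩)⟩
    have hαval : alphaDP n ca cm 0 1 l₀ l₁ F' = (tauDP n ca cm F' : ENNReal) := by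
      unfold alphaDP
      rw [if_pos hinE, ENNReal.coe_inj]
      unfold tauDP
      rw [← Finset.add_sum_erase _ _ h0, ← Finset.add_sum_erase _ _ h1]
      rw [hl0d, hl1d]
      ring
    have htau : tauDP n ca cm F' ≤ tauDP n ca cm F := by
      unfold tauDP
      exact add_le_add (Finset.sum_le_sum fun v _ => ellc_mono ca hsub v)
        (Finset.sum_le_sum_of_subset hsub)
    calc sInf {a : ENNReal | ∃ l₀ ∈ L, ∃ l₁ ∈ L, a = fDP n Ech ca cm 0 1 l₀ l₁}
        ≤ fDP n Ech ca cm 0 1 l₀ l₁ := sInf_le ⟨l₀, hl₀L, l₁, hl₁L, rfl⟩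
      _ ≤ alphaDP n ca cm 0 1 l₀ l₁ F' := sInf_le ⟨F', hFam, rfl⟩
      _ = (tauDP n ca cm F' : ENNReal) := hαval
      _ ≤ (tauDP n ca cm F : ENNReal) := ENNReal.coe_le_coe.2 htau
end

section
/- Decomposition of forced cost: let F ∈ 𝓕_{i,j} with F ⊆ E(l_i,l_j) and |F| ≥ 2, let e = (x,y) ∈ F be the first edge of F (so i ≤ x < j < y < n and F' := F \ {e} ∈ 𝓕_{j,y}), and let l_y = ℓ_F(y). Then α_F(l_i,l_j) = c(e) + l_i + β_e(l_i,l_y) + α_{F'}(l_j,l_y), where β_e(l_i,l_y) = 0 if x = i and β_e(l_i,l_y) = ℓ_e(x) = c_e^x otherwise. -/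
open SimpleGraph

/-- Decomposition of forced cost: if `F ∈ 𝓕_{i,j}`, `F ⊆ E(l_i,l_j)`, `|F| ≥ 2`,
`e = (x,y)` is the first edge of `F` (so `i ≤ x < j < y < n` and `F' = F \ {e} ∈ 𝓕_{j,y}`),
and `l_y = ℓ_F(y)`, then
`α_F(l_i,l_j) = c(e) + l_i + β_e(l_i,l_y) + α_{F'}(l_j,l_y)`, where `β_e(l_i,l_y) = 0`
if `x = i` and `β_e(l_i,l_y) = c_e^x` otherwise. -/
theorem stmt11 (n i j x y : ℕ) (Ech : Finset (ℕ × ℕ))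
    (hE : ∀ p ∈ Ech, p.1 < p.2 ∧ p.2 ≤ n)
    (ca : ℕ × ℕ → ℕ → NNReal) (cm : ℕ × ℕ → NNReal) (li lj : NNReal)
    (F : Finset (ℕ × ℕ)) (hFmem : F ∈ Fam n Ech i j) (hin : inE ca i j li lj F)
    (hcard : 2 ≤ F.card) (hxy : (x, y) ∈ F)
    (hix : i ≤ x) (hxj : x < j) (hjy : j < y) (hyn : y < n)
    (hfirst : F.erase (x, y) ∈ Fam n Ech j y) :
    alphaDP n ca cm i j li lj F
      = (cm (x, y) : ENNReal) + (li : ENNReal)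
        + (if x = i then 0 else (ca (x, y) x : ENNReal))
        + alphaDP n ca cm j y lj (ellc ca F y) (F.erase (x, y)) := by
  classical
  obtain ⟨hF'E, hF'lo, -, -⟩ := hfirst
  set e : ℕ × ℕ := (x, y) with he
  set F' : Finset (ℕ × ℕ) := F.erase e with hF'def
  have hlow : ∀ p ∈ F', j ≤ p.1 ∧ j < p.2 := by
    intro p hp
    have h1 := hF'lo p hp
    have h2 := (hE p (hF'E hp)).1
    exact ⟨h1, lt_of_le_of_lt h1 h2⟩
  -- ℓ_{F'} vanishes below j
  have hellzero : ∀ v, v < j → ellc ca F' v = 0 := by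
    intro v hv
    have : F'.filter (fun p => p.1 = v ∨ p.2 = v) = ∅ := by
      apply Finset.filter_false_of_mem
      intro p hp
      obtain ⟨h1, h2⟩ := hlow p hp
      rintro (rfl | rfl) <;> omega
    simp [ellc, this]
  -- ℓ_F = ℓ_{F'} away from x and y
  have hellsame : ∀ v, v ≠ x → v ≠ y → ellc ca F v = ellc ca F' v := by
    intro v hvx hvy
    have hfil : F'.filter (fun p => p.1 = v ∨ p.2 = v)
        = F.filter (fun p => p.1 = v ∨ p.2 = v) := by
      rw [hF'def, Finset.filter_erase, Finset.erase_eq_of_notMem]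
      simp only [Finset.mem_filter]
      rintro ⟨-, h | h⟩
      · exact hvx (by simpa [he] using h.symm)
      · exact hvy (by simpa [he] using h.symm)
    rw [ellc, ellc, hfil]
  -- ℓ_F(x) = ca (x,y) x
  have hellx : ellc ca F x = ca e x := by
    have hfil : F.filter (fun p => p.1 = x ∨ p.2 = x) = {e} := by
      ext p
      simp only [Finset.mem_filter, Finset.mem_singleton]
      constructor
      · rintro ⟨hp, hcond⟩
        by_contra hne
        have hp' : p ∈ F' := Finset.mem_erase.2 ⟨hne, hp⟩
        obtain ⟨h1, h2⟩ := hlow p hp'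
        rcases hcond with h | h <;> omega
      · rintro rfl
        exact ⟨hxy, Or.inl rfl⟩
    rw [ellc, hfil, Finset.sup_singleton]
  -- inE for F'
  have hinE' : inE ca j y lj (ellc ca F y) F' := by
    intro p hp
    have hpF : p ∈ F := Finset.mem_of_mem_erase hp
    refine ⟨fun h => (hin p hpF).2 h, fun h => ?_⟩
    exact Finset.le_sup (f := fun q => ca q y) (Finset.mem_filter.2 ⟨hpF, h⟩)
  have hinF : inE ca i j li lj F := hin
  rw [alphaDP, if_pos hinF, alphaDP, if_pos hinE']
  -- reduce to NNReal
  rw [show (if x = i then (0 : ENNReal) else (ca (x, y) x : ENNReal))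
      = ((if x = i then 0 else ca (x, y) x : NNReal) : ENNReal) by
    split <;> simp]
  rw [← ENNReal.coe_add, ← ENNReal.coe_add, ← ENNReal.coe_add]
  congr 1
  -- sums
  have hsum1 : ∑ p ∈ F, cm p = cm e + ∑ p ∈ F', cm p :=
    (Finset.add_sum_erase F cm hxy).symm
  set T : Finset ℕ := ((Finset.range (n + 1)).erase i).erase j with hT
  set T' : Finset ℕ := ((Finset.range (n + 1)).erase j).erase y with hT'
  have hyT : y ∈ T := by
    simp only [hT, Finset.mem_erase, Finset.mem_range]
    omega
  have hiT' : i ∈ T' := by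
    simp only [hT', Finset.mem_erase, Finset.mem_range]
    omega
  have hsum2 : ∑ v ∈ T, ellc ca F v
      = (if x = i then 0 else ca e x) + ellc ca F y + ∑ v ∈ T', ellc ca F' v := by
    rw [← Finset.add_sum_erase T _ hyT]
    rw [← Finset.add_sum_erase T' _ hiT', hellzero i (by omega), zero_add]
    by_cases hxi : x = i
    · rw [if_pos hxi, zero_add]
      congr 1
      have hsetEq : T.erase y = T'.erase i := by
        ext v
        simp only [hT, hT', Finset.mem_erase, Finset.mem_range]
        tauto
      rw [hsetEq]
      apply Finset.sum_congr rfl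
      intro v hv
      simp only [Finset.mem_erase, hT'] at hv
      exact hellsame v (by omega) (by tauto)
    · rw [if_neg hxi]
      have hxTy : x ∈ T.erase y := by
        simp only [hT, Finset.mem_erase, Finset.mem_range]
        omega
      have hxT'i : x ∈ T'.erase i := by
        simp only [hT', Finset.mem_erase, Finset.mem_range]
        omega
      rw [← Finset.add_sum_erase _ _ hxTy, ← Finset.add_sum_erase _ _ hxT'i,
        hellzero x (by omega), zero_add, hellx]
      have hsetEq : (T.erase y).erase x = (T'.erase i).erase x := by
        ext v
        simp only [hT, hT', Finset.mem_erase, Finset.mem_range]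
        tauto
      have hS : ∑ v ∈ (T.erase y).erase x, ellc ca F v
          = ∑ v ∈ (T'.erase i).erase x, ellc ca F' v := by
        rw [hsetEq]
        apply Finset.sum_congr rfl
        intro v hv
        simp only [Finset.mem_erase, hT'] at hv
        exact hellsame v (by tauto) (by tauto)
      rw [hS]
      ring
  rw [hsum1, hsum2]
  ring
end
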